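/- arXiv:2405.10924 — 2 statements merged into one kernel-verified Lean document; each statement's English description precedes it below -/
import Mathlib

section
/- Let a (v',b,r,k',λ)-BIBD with v' > 1 be partially induced by a subset L ⊆ [v'] of size v (1 ≤ v ≤ v'), i.e., each block B is replaced by B ∩ L. Then the variance of the induced block sizes equals μ·(1 + (v−1)(k'−1)/(v'−1) − μ), where μ = v·k'/v' is the mean induced block size. In particular, the variance is independent of the choice of L. -/
/-!
Expanding `|B ∩ L|²` as the number of pairs `(m₁, m₂) ∈ L × L` with both points in `B`,
the sum of squares counts each diagonal pair `r` times and each off-diagonal pair `λ` times,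
so it equals `v r + λ v (v - 1)`. Double counting incidences gives `r v' = b k'` and,
through a fixed point, `λ (v' - 1) = r (k' - 1)`; hence `r / b = k' / v'` and
`λ / b = k' (k' - 1) / (v' (v' - 1))`, and the second moment is `μ + μ (v - 1)(k' - 1)/(v' - 1)`.
-/

open Finset

namespace Finset

variable {ι α : Type*} [DecidableEq α]

theorem sum_card_inter_eq_sum_card_filter_mem (s : Finset ι) (B : ι → Finset α)
    (L : Finset α) : ∑ n ∈ s, #(B n ∩ L) = ∑ m ∈ L, #{n ∈ s | m ∈ B n} := by
  simp_rw [inter_comm, ← filter_mem_eq_inter, card_eq_sum_ones, sum_filter]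
  exact sum_comm

theorem sum_card_inter_sq [Fintype ι] (B : ι → Finset α) (L : Finset α) :
    ∑ n, #(B n ∩ L) ^ 2 = ∑ m₁ ∈ L, ∑ m₂ ∈ L, #{n | m₁ ∈ B n ∧ m₂ ∈ B n} := by
  have := sum_card_inter_eq_sum_card_filter_mem univ (fun n ↦ B n ×ˢ B n) (L ×ˢ L)
  simp only [product_inter_product, card_product, mem_product] at this
  simpa only [sq, sum_product] using this

end Finset

namespace BlockDesign

variable {ι α R : Type*} [Fintype ι] [DecidableEq α] [CommRing R] {B : ι → Finset α}
  {k r lam : ℕ}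

theorem sum_card_inter_sq_of_pair_regular (hr : ∀ m, #{n | m ∈ B n} = r)
    (hlam : ∀ m₁ m₂, m₁ ≠ m₂ → #{n | m₁ ∈ B n ∧ m₂ ∈ B n} = lam) (L : Finset α) :
    (∑ n, #(B n ∩ L) ^ 2 : R) = #L * r + lam * #L * (#L - 1) := by
  have hrow : ∀ m₁ ∈ L, (∑ m₂ ∈ L, #{n | m₁ ∈ B n ∧ m₂ ∈ B n} : R) = r + lam * (#L - 1) := by
    intro m₁ hm₁
    rw [← add_sum_erase _ _ hm₁,
      sum_congr rfl fun m₂ hm₂ ↦ by rw [hlam m₁ m₂ (ne_of_mem_erase hm₂).symm]]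
    simp [hr, cast_card_erase_of_mem hm₁, mul_comm]
  have hsq := congrArg (Nat.cast : ℕ → R) (sum_card_inter_sq B L)
  push_cast at hsq
  rw [hsq, sum_congr rfl hrow, sum_const, nsmul_eq_mul]
  ring

theorem card_mul_replication_eq_card_mul_blockSize [Fintype α] (hk : ∀ n, #(B n) = k)
    (hr : ∀ m, #{n | m ∈ B n} = r) : Fintype.card α * r = Fintype.card ι * k := by
  have hcount := sum_card_inter_eq_sum_card_filter_mem univ B univ
  simpa [hk, hr, card_univ, mul_comm] using hcount.symm

theorem pair_mul_card_sub_one_eq_replication_mul [Fintype α] (hk : ∀ n, #(B n) = k)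
    (hr : ∀ m, #{n | m ∈ B n} = r)
    (hlam : ∀ m₁ m₂, m₁ ≠ m₂ → #{n | m₁ ∈ B n ∧ m₂ ∈ B n} = lam) (m₀ : α) :
    (lam * (Fintype.card α - 1) : R) = r * (k - 1) := by
  have hcount := congrArg (Nat.cast : ℕ → R)
    (sum_card_inter_eq_sum_card_filter_mem {n | m₀ ∈ B n} B (univ.erase m₀))
  have hblock : ∀ n ∈ ({n | m₀ ∈ B n} : Finset ι), (#(B n ∩ univ.erase m₀) : R) = k - 1 := by
    intro n hn
    rw [inter_erase, inter_univ, cast_card_erase_of_mem (mem_filter.1 hn).2, hk]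
  have hpoint : ∀ m ∈ univ.erase m₀,
      (#{n ∈ ({n | m₀ ∈ B n} : Finset ι) | m ∈ B n} : R) = lam := by
    intro m hm
    rw [filter_filter, hlam m₀ m (ne_of_mem_erase hm).symm]
  push_cast at hcount
  rw [sum_congr rfl hblock, sum_congr rfl hpoint, sum_const, sum_const, hr, nsmul_eq_mul,
    nsmul_eq_mul, cast_card_erase_of_mem (mem_univ m₀), card_univ] at hcount
  linear_combination -hcount

end BlockDesign

open BlockDesign in
theorem bibd_induced_variance_general (v' b r k' lam v : ℕ) (hb : 0 < b)
    (hv' : 1 < v')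
    (B : Fin b → Finset (Fin v'))
    (hk : ∀ n, (B n).card = k')
    (hr : ∀ m : Fin v', (Finset.univ.filter fun n => m ∈ B n).card = r)
    (hlam : ∀ m₁ m₂ : Fin v', m₁ ≠ m₂ →
      (Finset.univ.filter fun n => m₁ ∈ B n ∧ m₂ ∈ B n).card = lam)
    (L : Finset (Fin v')) (hL : L.card = v) :
    (1 / (b : ℚ)) * (∑ n, ((B n ∩ L).card : ℚ) ^ 2) - ((v : ℚ) * k' / v') ^ 2 =
      ((v : ℚ) * k' / v') *
        (1 + ((v : ℚ) - 1) * ((k' : ℚ) - 1) / ((v' : ℚ) - 1) - (v : ℚ) * k' / v') := by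
  have hsq : (∑ n, ((B n ∩ L).card : ℚ) ^ 2) = v * r + lam * v * (v - 1) := by
    simpa only [hL] using sum_card_inter_sq_of_pair_regular (R := ℚ) hr hlam L
  have hrep : (v' * r : ℚ) = b * k' := by
    exact_mod_cast by simpa using card_mul_replication_eq_card_mul_blockSize hk hr
  have hpair : (lam * (v' - 1) : ℚ) = r * (k' - 1) := by
    simpa using pair_mul_card_sub_one_eq_replication_mul hk hr hlam ⟨0, by omega⟩
  have hb0 : (b : ℚ) ≠ 0 := by positivity
  have hv'0 : (v' : ℚ) ≠ 0 := by positivity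
  have hv'1 : (v' : ℚ) - 1 ≠ 0 := sub_ne_zero.2 (by exact_mod_cast hv'.ne')
  rw [hsq]
  field_simp
  linear_combination (v * v' * (v' - 1) + v * (v - 1) * v' * (k' - 1) : ℚ) * hrep
    + (v * (v - 1) * v' ^ 2 : ℚ) * hpair

/-- The variance of the induced block sizes equals μ(1 + (v−1)(k'−1)/(v'−1) − μ),
where μ = v·k'/v'. -/
theorem bibd_induced_variance (v' b r k' lam v : ℕ) (hb : 0 < b)
    (hv' : 1 < v') (hv1 : 1 ≤ v) (hvv' : v ≤ v')
    (B : Fin b → Finset (Fin v'))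
    (hk : ∀ n, (B n).card = k')
    (hr : ∀ m : Fin v', (Finset.univ.filter fun n => m ∈ B n).card = r)
    (hlam : ∀ m₁ m₂ : Fin v', m₁ ≠ m₂ →
      (Finset.univ.filter fun n => m₁ ∈ B n ∧ m₂ ∈ B n).card = lam)
    (L : Finset (Fin v')) (hL : L.card = v) :
    (1 / (b : ℚ)) * (∑ n, ((B n ∩ L).card : ℚ) ^ 2) - ((v : ℚ) * k' / v') ^ 2 =
      ((v : ℚ) * k' / v') *
        (1 + ((v : ℚ) - 1) * ((k' : ℚ) - 1) / ((v' : ℚ) - 1) - (v : ℚ) * k' / v') :=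
  bibd_induced_variance_general v' b r k' lam v hb hv' B hk hr hlam L hL
end

section
/- Let N : [0,1]^v → ℝ^c be a classifier, x an input, and t ≤ k ≤ v. Suppose C is a family of k-subsets of [v] covering every t-subset of [v], and N is robust on I_B(x) for every B ∈ C. Then N is robust on the L₀ t-ball B_t(x) = { x' ∈ [0,1]^v : |{ i : x'_i ≠ x_i }| ≤ t }. -/
/-! A point differing from `x` in at most `t` coordinates differs from it only inside some
`t`-subset, hence only inside a block of the covering, where robustness is assumed. -/

/-- The argmax of a classifier output. -/
noncomputable def Argmax {c : ℕ} [NeZero c] (y : Fin c → ℝ) : Fin c :=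
  (Finset.exists_max_image Finset.univ y Finset.univ_nonempty).choose

namespace Finset

variable {α : Type*}

def IsCovering (C : Finset (Finset α)) (t : ℕ) : Prop :=
  ∀ S : Finset α, S.card = t → ∃ B ∈ C, S ⊆ B

theorem IsCovering.exists_superset_of_card_le [Fintype α] {C : Finset (Finset α)} {t : ℕ}
    (hC : IsCovering C t) (ht : t ≤ Fintype.card α) {s : Finset α} (hs : s.card ≤ t) :
    ∃ B ∈ C, s ⊆ B := by
  obtain ⟨S, hsS, hS⟩ := exists_superset_card_eq hs (by simpa using ht)
  obtain ⟨B, hB, hSB⟩ := hC S hS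
  exact ⟨B, hB, hsS.trans hSB⟩

theorem eq_of_notMem_of_filter_ne_subset [Fintype α] {β : Type*} [DecidableEq β] {f g : α → β}
    {B : Finset α} (h : univ.filter (fun i => f i ≠ g i) ⊆ B) {i : α} (hi : i ∉ B) :
    f i = g i := by
  by_contra hne
  exact hi (h (mem_filter.2 ⟨mem_univ i, hne⟩))

end Finset

theorem covering_implies_L0_robust_general (v c t k : ℕ) [NeZero c]
    (htk : t ≤ k) (hkv : k ≤ v)
    (N : (Fin v → ℝ) → Fin c → ℝ) (x : Fin v → ℝ)
    (C : Finset (Finset (Fin v)))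
    (hcov : ∀ S : Finset (Fin v), S.card = t → ∃ B ∈ C, S ⊆ B)
    (hrob : ∀ B ∈ C, ∀ x' : Fin v → ℝ, (∀ i, x' i ∈ Set.Icc (0 : ℝ) 1) →
      (∀ i ∉ B, x' i = x i) → Argmax (N x') = Argmax (N x)) :
    ∀ x' : Fin v → ℝ, (∀ i, x' i ∈ Set.Icc (0 : ℝ) 1) →
      (Finset.univ.filter fun i => x' i ≠ x i).card ≤ t →
      Argmax (N x') = Argmax (N x) := by
  intro x' hx' hcard
  have htv : t ≤ Fintype.card (Fin v) := by rw [Fintype.card_fin]; exact htk.trans hkv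
  obtain ⟨B, hB, hdiff⟩ :=
    (show Finset.IsCovering C t from hcov).exists_superset_of_card_le htv hcard
  exact hrob B hB x' hx' fun i => Finset.eq_of_notMem_of_filter_ne_subset hdiff

/-- If a covering design's blocks all yield robust interval neighborhoods, the
classifier is robust on the L₀ t-ball. -/
theorem covering_implies_L0_robust (v c t k : ℕ) [NeZero c]
    (htk : t ≤ k) (hkv : k ≤ v)
    (N : (Fin v → ℝ) → Fin c → ℝ) (x : Fin v → ℝ)
    (hx : ∀ i, x i ∈ Set.Icc (0 : ℝ) 1)
    (C : Finset (Finset (Fin v)))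
    (hC : ∀ B ∈ C, B.card = k)
    (hcov : ∀ S : Finset (Fin v), S.card = t → ∃ B ∈ C, S ⊆ B)
    (hrob : ∀ B ∈ C, ∀ x' : Fin v → ℝ, (∀ i, x' i ∈ Set.Icc (0 : ℝ) 1) →
      (∀ i ∉ B, x' i = x i) → Argmax (N x') = Argmax (N x)) :
    ∀ x' : Fin v → ℝ, (∀ i, x' i ∈ Set.Icc (0 : ℝ) 1) →
      (Finset.univ.filter fun i => x' i ≠ x i).card ≤ t →
      Argmax (N x') = Argmax (N x) :=
  covering_implies_L0_robust_general v c t k htk hkv N x C hcov hrob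
end
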